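/- With m(λ,z) as in the previous statement (the Stefan symbol), the functions m₀ = 1/m, m₁ = (λ+κ)/m, m₂ = √z/m, m₃ = σ z √(λ+κ)/m, m₄ = σ z^{3/2}/m, m₅ = δ(λ+κ)^{3/2}/m, and m₆ = δ(λ+κ)√z / m are uniformly bounded on Σ_{π−φ₀} × Σ_φ × [0,δ*] × [0,σ*] × [1,∞) (the last factor for κ). -/

import Mathlib

open Real

noncomputable def omegaPM (cpm κ : ℝ) (l z : ℂ) : ℂ :=
  (l + (κ : ℂ) + (cpm : ℂ) * z) ^ ((1 : ℂ) / 2)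

noncomputable def stefanSymbol (cP cM κ δ σ aP aM : ℝ) (l z : ℂ) : ℂ :=
  l + (κ : ℂ)
  + ((σ : ℂ) * z + (δ : ℂ) * (l + (κ : ℂ))) *
      ((Real.sqrt cP : ℂ) * omegaPM cP κ l z + (Real.sqrt cM : ℂ) * omegaPM cM κ l z)
  + (aP : ℂ) * (Real.sqrt cP : ℂ) * omegaPM cP κ l z
  + (aM : ℂ) * (Real.sqrt cM : ℂ) * omegaPM cM κ l z

/-!
Write `L = λ + κ`, `w± = L + c± z` and `ω± = w±^{1/2}`. Since `|arg L| ≤ π - φ₀`, `|arg z| < φ`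
and `π - φ₀ + φ < 2π/3`, both `L` and `z` lie in the sector of half-opening `β = (π - φ₀ + φ)/2`,
`β < π/3`, around the mean `γ` of their arguments. This sector is convex, so `w±` and `σz + δL`
lie in it and have norm at least half the sum of the norms of their two summands. Hence `ω±` lies
within `β/2` of `γ/2`, and each of the five summands `L`, `(σz + δL)√c± ω±`, `a±√c± ω±` of `m` lies
within `3β/2 < π/2` of `3γ/2`. Projecting onto that direction, `|m|` is at least `cos (3β/2)` times
the sum of their norms, which dominates `|L| + (σ|z| + δ|L| + 1)|ω₊|`. Finally
`|ω₊|² = |w₊| ≥ (|L| + c₊|z|)/2` bounds `√|L|` and `√|z|` by multiples of `|ω₊|`, so each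
numerator is at most a constant times this majorant.
-/

open Complex

lemma norm_exp_neg_ofReal_mul_I (c : ℝ) : ‖exp (-(c * I))‖ = 1 := by
  rw [← neg_mul, ← ofReal_neg, norm_exp_ofReal_mul_I]

lemma abs_arg_le_iff_cos_mul_norm_le_re {x : ℂ} {β : ℝ} (h0 : 0 ≤ β) (hπ : β ≤ π) :
    |x.arg| ≤ β ↔ Real.cos β * ‖x‖ ≤ x.re := by
  rcases eq_or_ne x 0 with rfl | hx
  · simpa using h0
  rw [← norm_mul_cos_arg x, mul_comm, mul_le_mul_iff_right₀ (norm_pos_iff.mpr hx),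
    ← Real.cos_abs x.arg]
  exact (Real.strictAntiOn_cos.le_iff_ge ⟨h0, hπ⟩ ⟨abs_nonneg _, abs_arg_le_pi x⟩).symm

/-- The angle `α` need not be the principal argument `x.arg`. -/
def InSector (c β : ℝ) (x : ℂ) : Prop :=
  ∃ α : ℝ, |α - c| ≤ β ∧ x = ‖x‖ * exp (α * I)

namespace InSector

variable {c c' β β' : ℝ} {x y : ℂ}

lemma of_arg (x : ℂ) : InSector x.arg 0 x :=
  ⟨x.arg, by simp, (norm_mul_exp_arg_mul_I x).symm⟩

lemma zero (hβ : 0 ≤ β) : InSector c β 0 :=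
  ⟨c, by simpa using hβ, by simp⟩

lemma nonneg (hx : InSector c β x) : 0 ≤ β :=
  let ⟨_, hα, _⟩ := hx
  (abs_nonneg _).trans hα

lemma mono (hx : InSector c β x) (h : |c - c'| + β ≤ β') : InSector c' β' x := by
  obtain ⟨α, hα, hx⟩ := hx
  exact ⟨α, (abs_sub_le α c c').trans (by linarith), hx⟩

lemma ofReal_mul (hx : InSector c β x) {a : ℝ} (ha : 0 ≤ a) : InSector c β (a * x) := by
  obtain ⟨α, hα, hx⟩ := hx
  refine ⟨α, hα, ?_⟩
  rw [norm_mul, norm_real, Real.norm_of_nonneg ha, Complex.ofReal_mul]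
  conv_lhs => rw [hx]
  ring

lemma mul (hx : InSector c β x) (hy : InSector c' β' y) :
    InSector (c + c') (β + β') (x * y) := by
  obtain ⟨α, hα, hx⟩ := hx
  obtain ⟨α', hα', hy⟩ := hy
  refine ⟨α + α', ?_, ?_⟩
  · calc |α + α' - (c + c')| = |(α - c) + (α' - c')| := by ring_nf
      _ ≤ β + β' := (abs_add_le _ _).trans (add_le_add hα hα')
  · rw [norm_mul, Complex.ofReal_mul, ofReal_add, add_mul, Complex.exp_add]
    conv_lhs => rw [hx, hy]
    ring

lemma cos_mul_norm_le_re (hx : InSector c β x) (hβ : β ≤ π) :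
    Real.cos β * ‖x‖ ≤ (exp (-(c * I)) * x).re := by
  obtain ⟨α, hα, hxα⟩ := hx
  have hrot : exp (-(c * I)) * x = ‖x‖ * exp ((α - c : ℝ) * I) := by
    conv_lhs => rw [hxα]
    rw [ofReal_sub, sub_mul, sub_eq_add_neg, Complex.exp_add]
    ring
  rw [hrot, re_ofReal_mul, exp_ofReal_mul_I_re, mul_comm]
  gcongr
  rw [← Real.cos_abs (α - c)]
  exact Real.cos_le_cos_of_nonneg_of_le_pi (abs_nonneg _) hβ hα

lemma cos_mul_sum_norm_le_norm_sum {ι : Type*} (s : Finset ι) {x : ι → ℂ}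
    (hx : ∀ i ∈ s, InSector c β (x i)) (hβ : β ≤ π) :
    Real.cos β * ∑ i ∈ s, ‖x i‖ ≤ ‖∑ i ∈ s, x i‖ :=
  calc Real.cos β * ∑ i ∈ s, ‖x i‖ = ∑ i ∈ s, Real.cos β * ‖x i‖ := Finset.mul_sum ..
    _ ≤ ∑ i ∈ s, (exp (-(c * I)) * x i).re :=
      Finset.sum_le_sum fun i hi => (hx i hi).cos_mul_norm_le_re hβ
    _ = (exp (-(c * I)) * ∑ i ∈ s, x i).re := by rw [Finset.mul_sum, re_sum]
    _ ≤ ‖exp (-(c * I)) * ∑ i ∈ s, x i‖ := re_le_norm _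
    _ = ‖∑ i ∈ s, x i‖ := by rw [norm_mul, norm_exp_neg_ofReal_mul_I, one_mul]

lemma add (hx : InSector c β x) (hy : InSector c β y) (hβ : β ≤ π / 2) :
    InSector c β (x + y) := by
  have hβπ : β ≤ π := by linarith [Real.pi_pos]
  set u := exp (-(c * I)) * (x + y)
  have hu_norm : ‖u‖ = ‖x + y‖ := by rw [norm_mul, norm_exp_neg_ofReal_mul_I, one_mul]
  have hu : |u.arg| ≤ β := by
    rw [abs_arg_le_iff_cos_mul_norm_le_re hx.nonneg hβπ, hu_norm]
    calc Real.cos β * ‖x + y‖ ≤ Real.cos β * ‖x‖ + Real.cos β * ‖y‖ := by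
          rw [← mul_add]
          exact mul_le_mul_of_nonneg_left (norm_add_le x y)
            (Real.cos_nonneg_of_mem_Icc ⟨by linarith [hx.nonneg], hβ⟩)
      _ ≤ u.re := by
          rw [show u = exp (-(c * I)) * x + exp (-(c * I)) * y from mul_add _ _ _, add_re]
          exact add_le_add (hx.cos_mul_norm_le_re hβπ) (hy.cos_mul_norm_le_re hβπ)
  refine ⟨c + u.arg, by simpa using hu, ?_⟩
  have hxy : x + y = exp (c * I) * u := by
    rw [← mul_assoc, ← Complex.exp_add, add_neg_cancel, Complex.exp_zero, one_mul]
  rw [← hu_norm, hxy]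
  conv_lhs => rw [← norm_mul_exp_arg_mul_I u]
  rw [ofReal_add, add_mul, Complex.exp_add]
  ring

lemma abs_arg_sub_le (hx : InSector c β x) (hx0 : x ≠ 0) (h : |c| + β < π) :
    |x.arg - c| ≤ β := by
  obtain ⟨α, hα, hxα⟩ := hx
  have hα_lt : |α| < π := by linarith [abs_sub_abs_le_abs_sub α c]
  obtain ⟨h1, h2⟩ := abs_lt.mp hα_lt
  rwa [hxα, arg_real_mul _ (norm_pos_iff.mpr hx0), exp_mul_I,
    arg_cos_add_sin_mul_I ⟨h1, h2.le⟩]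

lemma cpow (hx : InSector c β x) (h : |c| + β < π) {r : ℝ} (hr : r ≠ 0) :
    InSector (r * c) (|r| * β) (x ^ (r : ℂ)) := by
  rcases eq_or_ne x 0 with rfl | hx0
  · rw [zero_cpow (ofReal_ne_zero.mpr hr)]
    exact zero (mul_nonneg (abs_nonneg r) hx.nonneg)
  refine ⟨r * x.arg, ?_, ?_⟩
  · rw [← mul_sub, abs_mul]
    exact mul_le_mul_of_nonneg_left (hx.abs_arg_sub_le hx0 h) (abs_nonneg r)
  · rw [norm_cpow_real, exp_mul_I]
    conv_lhs => rw [cpow_ofReal]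
    push_cast
    ring_nf

end InSector

lemma norm_add_ofReal_sq (l : ℂ) (κ : ℝ) : ‖l + κ‖ ^ 2 = ‖l‖ ^ 2 + 2 * κ * l.re + κ ^ 2 := by
  simp only [Complex.sq_norm, normSq_apply, add_re, add_im, ofReal_re, ofReal_im]
  ring

lemma abs_arg_add_ofReal_le {l : ℂ} {κ Θ : ℝ} (hΘ : π / 2 ≤ Θ) (hl : |l.arg| ≤ Θ) (hκ : 0 ≤ κ) :
    |(l + κ).arg| ≤ Θ := by
  rcases le_total π Θ with hπ | hπ
  · exact (abs_arg_le_pi _).trans hπ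
  rw [abs_arg_le_iff_cos_mul_norm_le_re (by linarith [Real.pi_pos]) hπ] at hl ⊢
  have hcos : Real.cos Θ ≤ 0 :=
    Real.cos_nonpos_of_pi_div_two_le_of_le hΘ (by linarith [Real.pi_pos])
  rw [add_re, ofReal_re]
  rcases le_or_gt 0 (l.re + κ) with hre | hre
  · nlinarith [norm_nonneg (l + κ)]
  -- Moving right within the left half-plane shrinks `|re|` at fixed `im`, hence `|re| / ‖·‖`.
  have hsq : ‖l‖ ^ 2 = l.re ^ 2 + l.im ^ 2 := by rw [Complex.sq_norm, normSq_apply]; ring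
  have hsq' : ‖l + κ‖ ^ 2 = (l.re + κ) ^ 2 + l.im ^ 2 := by
    rw [norm_add_ofReal_sq, hsq]; ring
  have hl2 : l.re ^ 2 ≤ Real.cos Θ ^ 2 * ‖l‖ ^ 2 := by nlinarith
  have hshift : (l.re + κ) ^ 2 ≤ l.re ^ 2 := by nlinarith
  have key : (l.re + κ) ^ 2 ≤ (Real.cos Θ * ‖l + κ‖) ^ 2 := by
    nlinarith [mul_le_mul_of_nonneg_right hshift (sub_nonneg.mpr (Real.cos_sq_le_one Θ))]
  have := sq_le_sq.mp key
  rw [abs_of_neg hre, abs_of_nonpos (mul_nonpos_of_nonpos_of_nonneg hcos (norm_nonneg _))] at this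
  linarith

lemma div_two_le_norm_add_ofReal {l : ℂ} {κ : ℝ} (hl : |l.arg| ≤ 2 * π / 3) (hκ : 0 ≤ κ) :
    κ / 2 ≤ ‖l + κ‖ := by
  have hcos : Real.cos (2 * π / 3) = -(1 / 2) := by
    rw [show 2 * π / 3 = π - π / 3 by ring, Real.cos_pi_sub, Real.cos_pi_div_three]
  have hre := (abs_arg_le_iff_cos_mul_norm_le_re (by positivity)
    (by linarith [Real.pi_pos])).mp hl
  rw [hcos] at hre
  have := norm_add_ofReal_sq l κ
  nlinarith [sq_nonneg (‖l‖ - κ / 2), norm_nonneg (l + κ)]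

section TwoSectors

variable {L z : ℂ} {Θ φ a b : ℝ}

lemma inSector_midpoint (hL : |L.arg| ≤ Θ) (hz : |z.arg| ≤ φ) :
    InSector ((L.arg + z.arg) / 2) ((Θ + φ) / 2) L ∧
      InSector ((L.arg + z.arg) / 2) ((Θ + φ) / 2) z := by
  have hd : |L.arg - z.arg| ≤ Θ + φ := (abs_sub _ _).trans (add_le_add hL hz)
  constructor <;> refine (InSector.of_arg _).mono ?_
  · rw [add_zero, show L.arg - (L.arg + z.arg) / 2 = (L.arg - z.arg) / 2 by ring, abs_div,
      abs_two]
    linarith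
  · rw [add_zero, show z.arg - (L.arg + z.arg) / 2 = -((L.arg - z.arg) / 2) by ring, abs_neg,
      abs_div, abs_two]
    linarith

lemma inSector_mul_add_mul (hL : |L.arg| ≤ Θ) (hz : |z.arg| ≤ φ) (hΘφ : Θ + φ ≤ π)
    (ha : 0 ≤ a) (hb : 0 ≤ b) :
    InSector ((L.arg + z.arg) / 2) ((Θ + φ) / 2) (a * L + b * z) :=
  ((inSector_midpoint hL hz).1.ofReal_mul ha).add ((inSector_midpoint hL hz).2.ofReal_mul hb)
    (by linarith)

lemma norm_mul_add_mul_ge (hL : |L.arg| ≤ Θ) (hz : |z.arg| ≤ φ) (hΘφ : Θ + φ ≤ 2 * π / 3)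
    (ha : 0 ≤ a) (hb : 0 ≤ b) :
    (a * ‖L‖ + b * ‖z‖) / 2 ≤ ‖a * L + b * z‖ := by
  have hΘφ0 : 0 ≤ Θ + φ := add_nonneg ((abs_nonneg _).trans hL) ((abs_nonneg _).trans hz)
  have hcos : 1 / 2 ≤ Real.cos ((Θ + φ) / 2) := by
    rw [← Real.cos_pi_div_three]
    exact Real.cos_le_cos_of_nonneg_of_le_pi (by linarith) (by linarith [Real.pi_pos])
      (by linarith)
  have hsum := InSector.cos_mul_sum_norm_le_norm_sum Finset.univ (x := ![a * L, b * z])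
    (fun i _ => by
      fin_cases i
      exacts [(inSector_midpoint hL hz).1.ofReal_mul ha, (inSector_midpoint hL hz).2.ofReal_mul hb])
    (by linarith [Real.pi_pos])
  simp only [Fin.sum_univ_two, Matrix.cons_val_zero, Matrix.cons_val_one, norm_mul,
    norm_real, Real.norm_of_nonneg ha, Real.norm_of_nonneg hb] at hsum
  nlinarith [mul_le_mul_of_nonneg_right hcos
    (add_nonneg (mul_nonneg ha (norm_nonneg L)) (mul_nonneg hb (norm_nonneg z)))]

end TwoSectors

lemma cos_mul_le_norm_stefanSymbol {cP cM κ δ σ aP aM Θ φ : ℝ} {l z : ℂ}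
    (hcP : 0 ≤ cP) (hcM : 0 ≤ cM) (hδ : 0 ≤ δ) (hσ : 0 ≤ σ) (haP : 0 ≤ aP) (haM : 0 ≤ aM)
    (hL : |(l + κ).arg| ≤ Θ) (hz : |z.arg| ≤ φ) (hΘφ : Θ + φ ≤ 2 * π / 3) :
    Real.cos (3 * (Θ + φ) / 4) *
        (‖l + κ‖ + ‖σ * z + δ * (l + κ)‖ *
            (√cP * ‖omegaPM cP κ l z‖ + √cM * ‖omegaPM cM κ l z‖)
          + aP * √cP * ‖omegaPM cP κ l z‖ + aM * √cM * ‖omegaPM cM κ l z‖)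
      ≤ ‖stefanSymbol cP cM κ δ σ aP aM l z‖ := by
  set L : ℂ := l + κ
  obtain ⟨hL1, hL2⟩ := abs_le.mp hL
  obtain ⟨hz1, hz2⟩ := abs_le.mp hz
  have hω : ∀ c, 0 ≤ c →
      InSector ((L.arg + z.arg) / 2 / 2) ((Θ + φ) / 4) (omegaPM c κ l z) := by
    intro c hc
    have hw := inSector_mul_add_mul hL hz (by linarith [Real.pi_pos]) zero_le_one hc
    rw [ofReal_one, one_mul] at hw
    have hmid : |(L.arg + z.arg) / 2| ≤ (Θ + φ) / 2 := by
      rw [abs_le]; constructor <;> linarith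
    have := hw.cpow (by linarith [Real.pi_pos]) (r := 1 / 2) (by norm_num)
    rw [abs_of_pos (by norm_num : (0 : ℝ) < 1 / 2)] at this
    convert this using 1
    · ring
    · ring
    · norm_num [omegaPM, L]
  have hσδ : InSector ((L.arg + z.arg) / 2) ((Θ + φ) / 2) (σ * z + δ * L) := by
    rw [add_comm (σ * z : ℂ)]
    exact inSector_mul_add_mul hL hz (by linarith [Real.pi_pos]) hδ hσ
  have hβ : 3 * (Θ + φ) / 4 ≤ π := by linarith [Real.pi_pos]
  have hsum := InSector.cos_mul_sum_norm_le_norm_sum Finset.univ (c := 3 * (L.arg + z.arg) / 4)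
    (x := ![L, (σ * z + δ * L) * ((√cP : ℝ) * omegaPM cP κ l z),
      (σ * z + δ * L) * ((√cM : ℝ) * omegaPM cM κ l z),
      ((aP * √cP : ℝ) : ℂ) * omegaPM cP κ l z, ((aM * √cM : ℝ) : ℂ) * omegaPM cM κ l z])
    (fun i _ => by
      fin_cases i <;>
        [refine (InSector.of_arg L).mono ?_;
         refine (hσδ.mul ((hω cP hcP).ofReal_mul (Real.sqrt_nonneg _))).mono ?_;
         refine (hσδ.mul ((hω cM hcM).ofReal_mul (Real.sqrt_nonneg _))).mono ?_;
         refine ((hω cP hcP).ofReal_mul (by positivity)).mono ?_;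
         refine ((hω cM hcM).ofReal_mul (by positivity)).mono ?_] <;>
      · rw [← le_sub_iff_add_le, abs_le]
        constructor <;> linarith) hβ
  simp only [Fin.sum_univ_succ, Fin.sum_univ_zero, Matrix.cons_val_zero, Matrix.cons_val_succ,
    norm_mul, norm_real, Real.norm_of_nonneg (Real.sqrt_nonneg _),
    Real.norm_of_nonneg (mul_nonneg haP (Real.sqrt_nonneg _)),
    Real.norm_of_nonneg (mul_nonneg haM (Real.sqrt_nonneg _))] at hsum
  convert hsum using 2
  · ring
  · simp only [stefanSymbol]
    push_cast
    ring

lemma norm_cpow_one_half (x : ℂ) : ‖x ^ ((1 : ℂ) / 2)‖ = √‖x‖ := by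
  rw [show (1 : ℂ) / 2 = ((1 / 2 : ℝ) : ℂ) by norm_num, norm_cpow_real, Real.sqrt_eq_rpow]

lemma norm_cpow_three_halves (x : ℂ) : ‖x ^ ((3 : ℂ) / 2)‖ = ‖x‖ * √‖x‖ := by
  rw [show (3 : ℂ) / 2 = ((1 + 1 / 2 : ℝ) : ℂ) by norm_num, norm_cpow_real,
    Real.rpow_add' (norm_nonneg _) (by norm_num), Real.rpow_one, Real.sqrt_eq_rpow]

lemma norm_div_le_div_of_le_mul {N m : ℂ} {K T μ : ℝ} (hN : ‖N‖ ≤ K * T) (hm : μ * T ≤ ‖m‖)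
    (hμ : 0 < μ) (hT : 0 < T) : ‖N / m‖ ≤ K / μ := by
  rw [norm_div, ← mul_div_mul_right K μ hT.ne']
  exact div_le_div₀ ((norm_nonneg _).trans hN) hN (by positivity) hm

lemma sqrt_le_of_add_mul_le {A B w c : ℝ} (hc : 0 < c) (hA : 0 ≤ A) (hB : 0 ≤ B)
    (h : (A + c * B) / 2 ≤ w) : √A ≤ √2 * √w ∧ √B ≤ √(2 / c) * √w := by
  rw [← Real.sqrt_mul zero_le_two, ← Real.sqrt_mul (by positivity)]
  refine ⟨Real.sqrt_le_sqrt (by nlinarith), Real.sqrt_le_sqrt ?_⟩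
  rw [div_mul_eq_mul_div, le_div_iff₀ hc]
  linarith

noncomputable def stefanMajorant (cP κ δ σ : ℝ) (l z : ℂ) : ℝ :=
  ‖l + κ‖ + (σ * ‖z‖ + δ * ‖l + κ‖ + 1) * ‖omegaPM cP κ l z‖

lemma mul_stefanMajorant_le_norm_stefanSymbol {cP cM c₀ κ δ σ aP aM Θ φ : ℝ} {l z : ℂ}
    (hcP : 0 ≤ cP) (hcM : 0 ≤ cM) (hc₀ : 0 ≤ c₀) (haP : c₀ ≤ aP) (haM : 0 ≤ aM)
    (hδ : 0 ≤ δ) (hσ : 0 ≤ σ)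
    (hL : |(l + κ).arg| ≤ Θ) (hz : |z.arg| ≤ φ) (hΘφ : Θ + φ ≤ 2 * π / 3) :
    min 1 (√cP * min (1 / 2) c₀) * Real.cos (3 * (Θ + φ) / 4) * stefanMajorant cP κ δ σ l z
      ≤ ‖stefanSymbol cP cM κ δ σ aP aM l z‖ := by
  set μ := min 1 (√cP * min (1 / 2) c₀)
  have hΘφ0 : 0 ≤ Θ + φ := add_nonneg ((abs_nonneg _).trans hL) ((abs_nonneg _).trans hz)
  have hcos : 0 ≤ Real.cos (3 * (Θ + φ) / 4) :=
    Real.cos_nonneg_of_mem_Icc ⟨by linarith [Real.pi_pos], by linarith⟩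
  have hμ1 : μ ≤ 1 := min_le_left _ _
  have hμ2 : μ ≤ √cP / 2 := (min_le_right _ _).trans
    ((mul_le_mul_of_nonneg_left (min_le_left _ _) (Real.sqrt_nonneg _)).trans_eq (by ring))
  have hμ3 : μ ≤ √cP * aP := (min_le_right _ _).trans
    (by gcongr; exact (min_le_right _ _).trans haP)
  have hσδ := norm_mul_add_mul_ge hL hz hΘφ hδ hσ
  rw [add_comm (δ * ‖l + κ‖), add_comm (δ * (l + κ) : ℂ)] at hσδ
  refine le_trans ?_ (cos_mul_le_norm_stefanSymbol hcP hcM hδ hσ (hc₀.trans haP) haM hL hz hΘφ)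
  rw [mul_comm μ, mul_assoc]
  gcongr
  set W := ‖omegaPM cP κ l z‖
  set W' := ‖omegaPM cM κ l z‖
  have h1 : μ * ((σ * ‖z‖ + δ * ‖l + κ‖) * W) ≤ ‖σ * z + δ * (l + κ)‖ * (√cP * W) :=
    calc μ * ((σ * ‖z‖ + δ * ‖l + κ‖) * W) ≤ √cP / 2 * ((σ * ‖z‖ + δ * ‖l + κ‖) * W) := by
          gcongr
      _ = (σ * ‖z‖ + δ * ‖l + κ‖) / 2 * (√cP * W) := by ring
      _ ≤ ‖σ * z + δ * (l + κ)‖ * (√cP * W) := by gcongr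
  have h2 : 0 ≤ ‖σ * z + δ * (l + κ)‖ * (√cM * W') := by positivity
  have h3 : 0 ≤ aM * √cM * W' := by positivity
  unfold stefanMajorant
  nlinarith [mul_le_mul_of_nonneg_right hμ1 (norm_nonneg (l + κ)),
    mul_le_mul_of_nonneg_right hμ3 (norm_nonneg (omegaPM cP κ l z))]

lemma norm_stefan_numerators_div_le {cP κ δ σ μ K : ℝ} {l z m : ℂ} (hcP : 0 < cP)
    (hδ : 0 ≤ δ) (hσ : 0 ≤ σ) (hμ : 0 < μ) (hK : 2 + √2 + √(2 / cP) ≤ K)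
    (hL : 1 / 2 ≤ ‖l + κ‖) (hw : (‖l + κ‖ + cP * ‖z‖) / 2 ≤ ‖l + κ + cP * z‖)
    (hm : μ * stefanMajorant cP κ δ σ l z ≤ ‖m‖) :
    ‖1 / m‖ ≤ K / μ ∧
      ‖(l + κ) / m‖ ≤ K / μ ∧
      ‖z ^ ((1 : ℂ) / 2) / m‖ ≤ K / μ ∧
      ‖σ * z * (l + κ) ^ ((1 : ℂ) / 2) / m‖ ≤ K / μ ∧
      ‖σ * z ^ ((3 : ℂ) / 2) / m‖ ≤ K / μ ∧
      ‖δ * (l + κ) ^ ((3 : ℂ) / 2) / m‖ ≤ K / μ ∧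
      ‖δ * (l + κ) * z ^ ((1 : ℂ) / 2) / m‖ ≤ K / μ := by
  set T := stefanMajorant cP κ δ σ l z
  set W := ‖omegaPM cP κ l z‖
  obtain ⟨hLW, hzW⟩ : √‖l + κ‖ ≤ √2 * W ∧ √‖z‖ ≤ √(2 / cP) * W := by
    rw [show W = √‖l + κ + cP * z‖ from norm_cpow_one_half _]
    exact sqrt_le_of_add_mul_le hcP (norm_nonneg _) (norm_nonneg _) hw
  have hW0 : 0 ≤ W := norm_nonneg _
  have hT : ‖l + κ‖ + σ * ‖z‖ * W + δ * ‖l + κ‖ * W + W = T := by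
    simp only [T, stefanMajorant, W]; ring
  have hσW : 0 ≤ σ * ‖z‖ * W := by positivity
  have hδW : 0 ≤ δ * ‖l + κ‖ * W := by positivity
  have hs2 := Real.sqrt_nonneg 2
  have hsc := Real.sqrt_nonneg (2 / cP)
  have hK0 : 0 ≤ K := by linarith
  have bound : ∀ {N : ℂ} {k t : ℝ}, ‖N‖ ≤ k * t → k ≤ K → 0 ≤ t → t ≤ T → ‖N / m‖ ≤ K / μ :=
    fun hN hk ht htT => norm_div_le_div_of_le_mul (hN.trans (mul_le_mul hk htT ht hK0)) hm hμ
      (by linarith)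
  have hLT : ‖l + κ‖ ≤ T := by linarith
  have hWT : W ≤ T := by linarith
  have hσT : σ * ‖z‖ * W ≤ T := by linarith
  have hδT : δ * ‖l + κ‖ * W ≤ T := by linarith
  have hK2 : √2 ≤ K := by linarith
  have hKc : √(2 / cP) ≤ K := by linarith
  have hσz : 0 ≤ σ * ‖z‖ := by positivity
  have hδL : 0 ≤ δ * ‖l + κ‖ := by positivity
  refine ⟨bound (k := 2) (by rw [norm_one]; linarith) (by linarith) (norm_nonneg _) hLT,
    bound (k := 1) (by rw [one_mul]) (by linarith) (norm_nonneg _) hLT,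
    bound (by rw [norm_cpow_one_half]; exact hzW) hKc hW0 hWT,
    bound (k := √2) ?_ hK2 hσW hσT, bound (k := √(2 / cP)) ?_ hKc hσW hσT,
    bound (k := √2) ?_ hK2 hδW hδT, bound (k := √(2 / cP)) ?_ hKc hδW hδT⟩ <;>
    simp only [norm_mul, norm_real, Real.norm_of_nonneg hσ, Real.norm_of_nonneg hδ,
      norm_cpow_one_half, norm_cpow_three_halves]
  · linarith [mul_le_mul_of_nonneg_left hLW hσz]
  · linarith [mul_le_mul_of_nonneg_left hzW hσz]
  · linarith [mul_le_mul_of_nonneg_left hLW hδL]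
  · linarith [mul_le_mul_of_nonneg_left hzW hδL]

theorem stmt5_general (cP cM c₀ aP aM δs σs φ₀ φ : ℝ)
    (hcP : 0 < cP) (hcM : 0 < cM) (hc₀ : 0 < c₀) (haP : c₀ ≤ aP) (haM : c₀ ≤ aM)
    (hφ₀ : φ₀ ∈ Set.Ioo (π / 3) (π / 2)) (hφ : φ ∈ Set.Ioo 0 (φ₀ - π / 3)) :
    ∃ C : ℝ, ∀ (l z : ℂ) (δ σ κ : ℝ), 1 ≤ κ →
      δ ∈ Set.Icc (0 : ℝ) δs → σ ∈ Set.Icc (0 : ℝ) σs →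
      l ≠ 0 → |l.arg| < π - φ₀ → z ≠ 0 → |z.arg| < φ →
      (‖1 / stefanSymbol cP cM κ δ σ aP aM l z‖ ≤ C ∧
       ‖(l + (κ : ℂ)) / stefanSymbol cP cM κ δ σ aP aM l z‖ ≤ C ∧
       ‖z ^ ((1 : ℂ) / 2) / stefanSymbol cP cM κ δ σ aP aM l z‖ ≤ C ∧
       ‖(σ : ℂ) * z * (l + (κ : ℂ)) ^ ((1 : ℂ) / 2)
          / stefanSymbol cP cM κ δ σ aP aM l z‖ ≤ C ∧
       ‖(σ : ℂ) * z ^ ((3 : ℂ) / 2)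
          / stefanSymbol cP cM κ δ σ aP aM l z‖ ≤ C ∧
       ‖(δ : ℂ) * (l + (κ : ℂ)) ^ ((3 : ℂ) / 2)
          / stefanSymbol cP cM κ δ σ aP aM l z‖ ≤ C ∧
       ‖(δ : ℂ) * (l + (κ : ℂ)) * z ^ ((1 : ℂ) / 2)
          / stefanSymbol cP cM κ δ σ aP aM l z‖ ≤ C) := by
  obtain ⟨hφ₀1, hφ₀2⟩ := hφ₀
  obtain ⟨hφ1, hφ2⟩ := hφ
  have hΘφ : π - φ₀ + φ ≤ 2 * π / 3 := by linarith
  set μ := min 1 (√cP * min (1 / 2) c₀) * Real.cos (3 * (π - φ₀ + φ) / 4)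
  have hμ : 0 < μ := mul_pos (lt_min one_pos (by positivity))
    (Real.cos_pos_of_mem_Ioo ⟨by linarith, by linarith⟩)
  refine ⟨(2 + √2 + √(2 / cP)) / μ, fun l z δ σ κ hκ ⟨hδ, _⟩ ⟨hσ, _⟩ _ hl _ hz => ?_⟩
  have hL : |(l + κ).arg| ≤ π - φ₀ := abs_arg_add_ofReal_le (by linarith) hl.le (by linarith)
  have hLn : 1 / 2 ≤ ‖l + κ‖ :=
    (by linarith : (1 : ℝ) / 2 ≤ κ / 2).trans
      (div_two_le_norm_add_ofReal (hl.le.trans (by linarith)) (by linarith))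
  have hw := norm_mul_add_mul_ge hL hz.le hΘφ zero_le_one hcP.le
  rw [one_mul, ofReal_one, one_mul] at hw
  exact norm_stefan_numerators_div_le hcP hδ hσ hμ le_rfl hLn hw
    (mul_stefanMajorant_le_norm_stefanSymbol hcP.le hcM.le hc₀.le haP (hc₀.le.trans haM) hδ hσ
      hL hz.le hΘφ)

/-- Uniform boundedness of the symbols `m₀,…,m₆` built from the Stefan symbol `m`
on `Σ_{π-φ₀} × Σ_φ × [0,δ*] × [0,σ*] × [1,∞)`. -/
theorem stmt5 (cP cM c₀ aP aM δs σs φ₀ φ : ℝ)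
    (hcP : 0 < cP) (hcM : 0 < cM) (hc₀ : 0 < c₀) (haP : c₀ ≤ aP) (haM : c₀ ≤ aM)
    (hδs : 0 < δs) (hσs : 0 < σs)
    (hφ₀ : φ₀ ∈ Set.Ioo (π / 3) (π / 2)) (hφ : φ ∈ Set.Ioo 0 (φ₀ - π / 3)) :
    ∃ C : ℝ, ∀ (l z : ℂ) (δ σ κ : ℝ), 1 ≤ κ →
      δ ∈ Set.Icc (0 : ℝ) δs → σ ∈ Set.Icc (0 : ℝ) σs →
      l ≠ 0 → |l.arg| < π - φ₀ → z ≠ 0 → |z.arg| < φ →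
      (‖1 / stefanSymbol cP cM κ δ σ aP aM l z‖ ≤ C ∧
       ‖(l + (κ : ℂ)) / stefanSymbol cP cM κ δ σ aP aM l z‖ ≤ C ∧
       ‖z ^ ((1 : ℂ) / 2) / stefanSymbol cP cM κ δ σ aP aM l z‖ ≤ C ∧
       ‖(σ : ℂ) * z * (l + (κ : ℂ)) ^ ((1 : ℂ) / 2)
          / stefanSymbol cP cM κ δ σ aP aM l z‖ ≤ C ∧
       ‖(σ : ℂ) * z ^ ((3 : ℂ) / 2)
          / stefanSymbol cP cM κ δ σ aP aM l z‖ ≤ C ∧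
       ‖(δ : ℂ) * (l + (κ : ℂ)) ^ ((3 : ℂ) / 2)
          / stefanSymbol cP cM κ δ σ aP aM l z‖ ≤ C ∧
       ‖(δ : ℂ) * (l + (κ : ℂ)) * z ^ ((1 : ℂ) / 2)
          / stefanSymbol cP cM κ δ σ aP aM l z‖ ≤ C) :=
  stmt5_general cP cM c₀ aP aM δs σs φ₀ φ hcP hcM hc₀ haP haM hφ₀ hφ
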